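/- Any instantiation of the dynamic heuristic search framework in which every maximal consecutive run of gen-known and refine operations is finite is complete: every such execution is finite and terminates by returning 'solvable' or 'unsolvable'. In particular, in any execution, whenever an operation must be chosen at least one of gen-unknown, decl-solvable, or decl-unsolvable is applicable, and gen-unknown can be applied at most |S| − 1 times. -/
import Mathlib


open scoped ENNReal Classical

/-! ## Transition systems -/

/-- A labeled transition: (origin, label, target). -/
abbrev Tran (S L : Type) := S × L × S

/-- A transition system with states `S`, labels `L`, a cost function,
a set of labeled transitions, an initial state and a set of goal states. -/
structure TransSys (S L : Type) where
  cost : L → NNReal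
  trans : Set (Tran S L)
  init : S
  goal : Set S

namespace TransSys

variable {S L : Type}

/-- `IsPathFrom ts s π s'`: `π` is a path from `s` to `s'` in `ts`. -/
inductive IsPathFrom (ts : TransSys S L) : S → List (Tran S L) → S → Prop
  | nil (s : S) : IsPathFrom ts s [] s
  | cons {s m e : S} {l : L} {π : List (Tran S L)} :
      (s, l, m) ∈ ts.trans → IsPathFrom ts m π e → IsPathFrom ts s ((s, l, m) :: π) e

/-- The cost of a path: sum of the costs of its labels. -/
def pathCost (ts : TransSys S L) (π : List (Tran S L)) : NNReal :=
  (π.map fun t => ts.cost t.2.1).sum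

/-- A state is reachable if there is a path from the initial state to it. -/
def Reachable (ts : TransSys S L) (s : S) : Prop := ∃ π, ts.IsPathFrom ts.init π s

/-- A solution is a path from the initial state to a goal state. -/
def Solution (ts : TransSys S L) (π : List (Tran S L)) : Prop :=
  ∃ s ∈ ts.goal, ts.IsPathFrom ts.init π s

def Solvable (ts : TransSys S L) : Prop := ∃ π, ts.Solution π

/-- `h*`: minimal cost of a path from `s` to a goal state (`∞` if none exists). -/
noncomputable def hstar (ts : TransSys S L) (s : S) : ℝ≥0∞ :=
  sInf {x : ℝ≥0∞ | ∃ π, ∃ g ∈ ts.goal, ts.IsPathFrom s π g ∧ x = (ts.pathCost π : ℝ≥0∞)}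

/-- `g*`: minimal cost of a path from the initial state to `s` (`∞` if none exists). -/
noncomputable def gstar (ts : TransSys S L) (s : S) : ℝ≥0∞ :=
  sInf {x : ℝ≥0∞ | ∃ π, ts.IsPathFrom ts.init π s ∧ x = (ts.pathCost π : ℝ≥0∞)}

end TransSys

/-! ## Information sources and dynamic heuristics -/

/-- An information source for a transition system (Definition 1). -/
structure InfoSource {S L : Type} (ts : TransSys S L) (I : Type) where
  initInfo : I
  update : I → Tran S L → I
  refine : I → S → I

namespace InfoSource

variable {S L I : Type} {ts : TransSys S L}

/-- `ReachWith σ i K`: information object `i` is obtained from the initial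
information by updates/refinements, where `K` is the set consisting of the
initial state together with all targets of used transitions, every refined state
lies in `K`, and the origin of every used transition lies in `K` (Definition 2). -/
inductive ReachWith (σ : InfoSource ts I) : I → Set S → Prop
  | base : ReachWith σ σ.initInfo {ts.init}
  | update {i : I} {K : Set S} {t : Tran S L} :
      ReachWith σ i K → t ∈ ts.trans → t.1 ∈ K →
      ReachWith σ (σ.update i t) (insert t.2.2 K)
  | refine {i : I} {K : Set S} {s : S} :
      ReachWith σ i K → s ∈ K → ReachWith σ (σ.refine i s) K

/-- An information object is reachable (Definition 2). -/
def ReachableInfo (σ : InfoSource ts I) (i : I) : Prop := ∃ K, σ.ReachWith i K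

end InfoSource

section HeuristicProps

variable {S L I : Type} (ts : TransSys S L) (σ : InfoSource ts I) (h : S → I → ℝ≥0∞)

def DynSafe : Prop := ∀ (s : S) (i : I), σ.ReachableInfo i → h s i = ⊤ → ts.hstar s = ⊤

def DynAdmissible : Prop := ∀ (s : S) (i : I), σ.ReachableInfo i → h s i ≤ ts.hstar s

def DynConsistent : Prop :=
  ∀ t ∈ ts.trans, ∀ i : I, σ.ReachableInfo i →
    h t.1 i ≤ (ts.cost t.2.1 : ℝ≥0∞) + h t.2.2 i

def DynGoalAware : Prop := ∀ s ∈ ts.goal, ∀ i : I, σ.ReachableInfo i → h s i = 0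

def DynMonotonic : Prop :=
  ∀ i : I, σ.ReachableInfo i →
    (∀ s : S, ∀ t ∈ ts.trans, h s i ≤ h s (σ.update i t)) ∧
    (∀ s s' : S, h s i ≤ h s (σ.refine i s'))

end HeuristicProps

/-! ## Progression sources -/

/-- A progression source (Definition 5). -/
structure ProgSource {S L : Type} (ts : TransSys S L) (J : Type) where
  initJ : J
  progress : J → Tran S L → J
  merge : J → J → J

/-- The progression-based information source built on a progression source
(Definition 7): per-state information, updated by progressing along a
transition and merging with existing information at the target. -/
noncomputable def progInfoSource {S L J : Type} (ts : TransSys S L) (p : ProgSource ts J) :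
    InfoSource ts (S → Option J) where
  initInfo := fun x => if x = ts.init then some p.initJ else none
  update := fun i t => fun x =>
    if x = t.2.2 then
      match i t.1 with
      | none => i t.2.2
      | some j =>
        match i t.2.2 with
        | none => some (p.progress j t)
        | some j' => some (p.merge (p.progress j t) j')
    else i x
  refine := fun i _ => i

/-- The parent source (Definition 6): per-state `g`-values and parent pointers. -/
noncomputable def parentSource {S L : Type} (ts : TransSys S L) :
    ProgSource ts (NNReal × Option (Tran S L)) where
  initJ := (0, none)
  progress := fun j t => (j.1 + ts.cost t.2.1, some t)
  merge := fun a b => if a.1 ≤ b.1 then a else b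

/-- `ParentChain par s π`: `π` is the sequence of transitions obtained by
following parent pointers backwards from `s` until a state whose stored
pointer is `⊥` (read forwards). -/
inductive ParentChain {S L : Type} (par : S → Option (NNReal × Option (Tran S L))) :
    S → List (Tran S L) → Prop
  | nil {s : S} {g : NNReal} : par s = some (g, none) → ParentChain par s []
  | cons {g : NNReal} {t : Tran S L} {π : List (Tran S L)} :
      par t.2.2 = some (g, some t) → ParentChain par t.1 π →
      ParentChain par t.2.2 (π ++ [t])

/-! ## The dynamic heuristic search framework (Algorithm 1) -/

/-- A configuration of the framework: the known states and one information
object per information source. -/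
structure FConfig (S : Type) {ι : Type} (I : ι → Type) where
  known : Set S
  infos : ∀ k, I k

/-- The (non-terminating) operations of the framework. -/
inductive FOp where
  | genUnknown
  | genKnown
  | refineOp
deriving DecidableEq

section Framework

variable {S L ι : Type} {I : ι → Type} (ts : TransSys S L) (σ : ∀ k, InfoSource ts (I k))

/-- One step of the framework, labeled by the operation performed. -/
inductive FStep : FConfig S I → FOp → FConfig S I → Prop
  | genUnknown {c : FConfig S I} {t : Tran S L} :
      t ∈ ts.trans → t.1 ∈ c.known → t.2.2 ∉ c.known →
      FStep c .genUnknown ⟨insert t.2.2 c.known, fun k => (σ k).update (c.infos k) t⟩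
  | genKnown {c : FConfig S I} {t : Tran S L} :
      t ∈ ts.trans → t.1 ∈ c.known → t.2.2 ∈ c.known →
      FStep c .genKnown ⟨c.known, fun k => (σ k).update (c.infos k) t⟩
  | refineStep {c : FConfig S I} {s : S} :
      s ∈ c.known →
      FStep c .refineOp ⟨c.known, fun k => (σ k).refine (c.infos k) s⟩

/-- The initial configuration of the framework. -/
def initFConfig : FConfig S I := ⟨{ts.init}, fun k => (σ k).initInfo⟩

/-- A configuration occurring in some finite execution of the framework. -/
def FReach (c : FConfig S I) : Prop :=
  Relation.ReflTransGen (fun a b => ∃ op, FStep ts σ a op b) (initFConfig ts σ) c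

/-- Applicability of the gen-unknown operation. -/
def GenUnknownApp (c : FConfig S I) : Prop :=
  ∃ t ∈ ts.trans, t.1 ∈ c.known ∧ t.2.2 ∉ c.known

/-- Applicability of decl-solvable: a goal state is known. -/
def DeclSolvableApp (c : FConfig S I) : Prop := ∃ s ∈ c.known, s ∈ ts.goal

/-- Applicability of decl-unsolvable: no goal state is known and
no transition leaves the known states. -/
def DeclUnsolvableApp (c : FConfig S I) : Prop :=
  (∀ s ∈ c.known, s ∉ ts.goal) ∧ ¬ GenUnknownApp ts c

end Framework

/-! ## dynA* (Algorithm 2) -/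

/-- An open-list entry: (state, g-entry, h-entry). -/
abbrev Entry (S : Type) := S × NNReal × ℝ≥0∞

/-- The f-value of an open-list entry. -/
noncomputable def fval {S : Type} (en : Entry S) : ℝ≥0∞ := (en.2.1 : ℝ≥0∞) + en.2.2

/-- A configuration of dynA*: known states, closed set, open queue, the parent
information (g-values and parent pointers, i.e. the information of σ_p) and the
information object of the heuristic's source σ_h. -/
structure AConfig (S L I : Type) where
  known : Set S
  closed : Set S
  openq : Multiset (Entry S)
  par : S → Option (NNReal × Option (Tran S L))
  info : I

/-- The g-value currently stored for a state. -/
noncomputable def gOf {S L I : Type} (c : AConfig S L I) (s : S) : NNReal :=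
  ((c.par s).map Prod.fst).getD 0

section DynAStar

variable {S L I : Type} (ts : TransSys S L) (σh : InfoSource ts I) (h : S → I → ℝ≥0∞)

/-- Updating the parent information along a transition `t` (the update of the
progression-based parent source σ_p): the target's pair becomes
`(g(origin)+cost, t)` unless the previously stored g-value is smaller. -/
noncomputable def parUpd (par : S → Option (NNReal × Option (Tran S L))) (t : Tran S L) :
    S → Option (NNReal × Option (Tran S L)) := fun x =>
  if x = t.2.2 then
    match par t.1 with
    | none => par t.2.2
    | some (g, _) =>
      match par t.2.2 with
      | none => some (g + ts.cost t.2.1, some t)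
      | some (g', p') =>
          if g + ts.cost t.2.1 ≤ g' then some (g + ts.cost t.2.1, some t)
          else some (g', p')
  else par x

/-- Processing one successor transition `t = (s, ℓ, s')` during the expansion of
`s`: record the old g-value (undefined iff `s'` unknown), update both information
objects along `t`, add `s'` to the known states, and insert `(s', g(s'), h(s'))`
into the open queue if `h(s') < ∞` and `s'` is new or reached more cheaply
(removing `s'` from closed in the latter case: reopening). -/
noncomputable def procSucc (c : AConfig S L I) (t : Tran S L) : AConfig S L I :=
  let oldg : Option NNReal := if t.2.2 ∈ c.known then some (gOf c t.2.2) else none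
  let par' := parUpd ts c.par t
  let info' := σh.update c.info t
  let c' : AConfig S L I :=
    { known := insert t.2.2 c.known, closed := c.closed, openq := c.openq,
      par := par', info := info' }
  let gnew : NNReal := ((par' t.2.2).map Prod.fst).getD 0
  let hnew : ℝ≥0∞ := h t.2.2 info'
  if hnew = ⊤ then c'
  else
    match oldg with
    | none => { c' with openq := (t.2.2, gnew, hnew) ::ₘ c.openq }
    | some go =>
      if gnew < go then
        { c' with closed := c.closed \ {t.2.2},
                  openq := (t.2.2, gnew, hnew) ::ₘ c.openq }
      else c'

/-- Expanding a state: process all its successor transitions in order. -/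
noncomputable def expandAll (c : AConfig S L I) (l : List (Tran S L)) : AConfig S L I :=
  l.foldl (procSucc ts σh h) c

/-- `l` enumerates (without repetition) exactly the transitions with origin `s`. -/
def SuccList (s : S) (l : List (Tran S L)) : Prop :=
  l.Nodup ∧ ∀ t : Tran S L, t ∈ l ↔ t ∈ ts.trans ∧ t.1 = s

/-- Labels recording what happened in one iteration of dynA*. -/
inductive ALab (S L : Type) where
  | dup (en : Entry S)
  | reev (en : Entry S)
  | expand (en : Entry S)
  | retGoal (en : Entry S) (π : List (Tran S L))
  | unsolv

/-- The entry popped from the open queue in an iteration, if any. -/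
def popped {S L : Type} : ALab S L → Option (Entry S)
  | .dup en => some en
  | .reev en => some en
  | .expand en => some en
  | .retGoal en _ => some en
  | .unsolv => none

/-- The outcome of one iteration of dynA*. -/
inductive AOut (S L I : Type) where
  | cont (c : AConfig S L I)
  | retPath (π : List (Tran S L))
  | unsolvable

/-- One iteration of dynA* (Algorithm 2), with optional re-evaluation.
An entry of minimal f-value is popped; duplicates (closed states) are discarded;
otherwise both information objects are refined on the popped state (σ_p's refine
is the identity, so `par` is unchanged); with `reeval` set, a state whose
heuristic value increased is re-inserted instead of expanded; expanding a goal
state returns the path obtained by following parent pointers; expanding a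
non-goal state processes all its successor transitions. If the open queue is
empty, 'unsolvable' is returned. -/
inductive AStep (reeval : Bool) : AConfig S L I → ALab S L → AOut S L I → Prop
  | dup {c : AConfig S L I} {en : Entry S} {rest : Multiset (Entry S)} :
      c.openq = en ::ₘ rest → (∀ en' ∈ c.openq, fval en ≤ fval en') →
      en.1 ∈ c.closed →
      AStep reeval c (.dup en) (.cont { c with openq := rest })
  | reevFin {c : AConfig S L I} {en : Entry S} {rest : Multiset (Entry S)} :
      c.openq = en ::ₘ rest → (∀ en' ∈ c.openq, fval en ≤ fval en') →
      en.1 ∉ c.closed → reeval = true →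
      en.2.2 < h en.1 (σh.refine c.info en.1) →
      h en.1 (σh.refine c.info en.1) ≠ ⊤ →
      AStep reeval c (.reev en)
        (.cont { c with info := σh.refine c.info en.1,
                        openq := (en.1, gOf c en.1, h en.1 (σh.refine c.info en.1)) ::ₘ rest })
  | reevInf {c : AConfig S L I} {en : Entry S} {rest : Multiset (Entry S)} :
      c.openq = en ::ₘ rest → (∀ en' ∈ c.openq, fval en ≤ fval en') →
      en.1 ∉ c.closed → reeval = true →
      en.2.2 < h en.1 (σh.refine c.info en.1) →
      h en.1 (σh.refine c.info en.1) = ⊤ →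
      AStep reeval c (.reev en)
        (.cont { c with info := σh.refine c.info en.1, openq := rest })
  | retGoal {c : AConfig S L I} {en : Entry S} {rest : Multiset (Entry S)}
      {π : List (Tran S L)} :
      c.openq = en ::ₘ rest → (∀ en' ∈ c.openq, fval en ≤ fval en') →
      en.1 ∉ c.closed →
      ¬(reeval = true ∧ en.2.2 < h en.1 (σh.refine c.info en.1)) →
      en.1 ∈ ts.goal → ParentChain c.par en.1 π →
      AStep reeval c (.retGoal en π) (.retPath π)
  | expand {c : AConfig S L I} {en : Entry S} {rest : Multiset (Entry S)}
      {l : List (Tran S L)} :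
      c.openq = en ::ₘ rest → (∀ en' ∈ c.openq, fval en ≤ fval en') →
      en.1 ∉ c.closed →
      ¬(reeval = true ∧ en.2.2 < h en.1 (σh.refine c.info en.1)) →
      en.1 ∉ ts.goal → SuccList ts en.1 l →
      AStep reeval c (.expand en)
        (.cont (expandAll ts σh h
          { c with openq := rest, closed := insert en.1 c.closed,
                   info := σh.refine c.info en.1 } l))
  | unsolv {c : AConfig S L I} :
      c.openq = 0 → AStep reeval c .unsolv .unsolvable

/-- The initial configuration of dynA*. -/
noncomputable def initAConfig : AConfig S L I where
  known := {ts.init}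
  closed := ∅
  openq :=
    if h ts.init σh.initInfo = ⊤ then 0 else {(ts.init, 0, h ts.init σh.initInfo)}
  par := fun x => if x = ts.init then some (0, none) else none
  info := σh.initInfo

/-- `IsExec ts σh h reeval e lab N`: `e 0, …, e N` are the configurations at the
beginnings of the iterations of an execution of dynA*, with `lab n` recording what
happened in iteration `n`. -/
def IsExec (reeval : Bool) (e : ℕ → AConfig S L I) (lab : ℕ → ALab S L) (N : ℕ) : Prop :=
  e 0 = initAConfig ts σh h ∧
  ∀ n < N, AStep ts σh h reeval (e n) (lab n) (.cont (e (n + 1)))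

/-- A state `s` is settled at iteration `n` if it was expanded in some earlier
iteration at whose beginning its stored g-value was `g*(s)`. -/
def SettledAt (e : ℕ → AConfig S L I) (lab : ℕ → ALab S L) (n : ℕ) (s : S) : Prop :=
  ∃ m < n, ∃ en : Entry S, lab m = .expand en ∧ en.1 = s ∧
    (gOf (e m) s : ℝ≥0∞) = ts.gstar s

/-- Iterated refinement of an information object on a fixed state. -/
def refIter (i : I) (s : S) : ℕ → I
  | 0 => i
  | n + 1 => σh.refine (refIter i s n) s

end DynAStar

/-! ## Statement 2 -/


theorem stmt2 {S L ι : Type} [Fintype S] [Fintype L] {I : ι → Type}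
    (ts : TransSys S L) (σ : ∀ k, InfoSource ts (I k)) :
    -- whenever an operation must be chosen, gen-unknown, decl-solvable or
    -- decl-unsolvable is applicable
    (∀ c : FConfig S I, FReach ts σ c →
        GenUnknownApp ts c ∨ DeclSolvableApp ts c ∨ DeclUnsolvableApp ts c) ∧
    -- gen-unknown can be applied at most |S| - 1 times
    (∀ (e : ℕ → FConfig S I) (ops : ℕ → FOp) (n : ℕ),
        e 0 = initFConfig ts σ →
        (∀ m < n, FStep ts σ (e m) (ops m) (e (m + 1))) →
        ((Finset.range n).filter fun m => ops m = FOp.genUnknown).card ≤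
          Fintype.card S - 1) ∧
    -- there is no infinite execution in which every maximal consecutive run of
    -- gen-known and refine operations is finite (equivalently, in which
    -- gen-unknown occurs again and again); hence every such execution is finite
    -- and (by the first conjunct) terminates by returning
    ¬ ∃ (e : ℕ → FConfig S I) (ops : ℕ → FOp),
        e 0 = initFConfig ts σ ∧
        (∀ n, FStep ts σ (e n) (ops n) (e (n + 1))) ∧
        (∀ n, ∃ m, n ≤ m ∧ ops m = FOp.genUnknown) := by
  classical
  have step_known : ∀ {a b : FConfig S I} {op : FOp}, FStep ts σ a op b →
      (op = FOp.genUnknown → ∃ x ∉ a.known, b.known = insert x a.known) ∧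
      (op ≠ FOp.genUnknown → b.known = a.known) := by
    intro a b op h
    cases h with
    | genUnknown ht h1 h2 => exact ⟨fun _ => ⟨_, h2, rfl⟩, fun h => absurd rfl h⟩
    | genKnown ht h1 h2 => exact ⟨fun h => by simp at h, fun _ => rfl⟩
    | refineStep h1 => exact ⟨fun h => by simp at h, fun _ => rfl⟩
  -- bound lemma
  have bound : ∀ (e : ℕ → FConfig S I) (ops : ℕ → FOp) (n : ℕ),
      e 0 = initFConfig ts σ →
      (∀ m < n, FStep ts σ (e m) (ops m) (e (m + 1))) →
      ((Finset.range n).filter fun m => ops m = FOp.genUnknown).card + 1 ≤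
        (e n).known.ncard := by
    intro e ops n h0 hstep
    induction n with
    | zero =>
      simp [h0, initFConfig, Set.ncard_singleton]
    | succ n ih =>
      have ih' := ih (fun m hm => hstep m (Nat.lt_succ_of_lt hm))
      have hs := hstep n (Nat.lt_succ_self n)
      rw [Finset.range_add_one, Finset.filter_insert]
      by_cases hop : ops n = FOp.genUnknown
      · rw [if_pos hop]
        rw [Finset.card_insert_of_notMem (by simp)]
        have : (e (n+1)).known.ncard = (e n).known.ncard + 1 := by
          obtain ⟨x, hx, hins⟩ := (step_known hs).1 hop
          rw [hins, Set.ncard_insert_of_notMem hx (Set.toFinite _)]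
        omega
      · rw [if_neg hop]
        rw [(step_known hs).2 hop]
        exact ih'
  have bound' : ∀ (e : ℕ → FConfig S I) (ops : ℕ → FOp) (n : ℕ),
      e 0 = initFConfig ts σ →
      (∀ m < n, FStep ts σ (e m) (ops m) (e (m + 1))) →
      ((Finset.range n).filter fun m => ops m = FOp.genUnknown).card ≤
        Fintype.card S - 1 := by
    intro e ops n h0 hstep
    have h1 := bound e ops n h0 hstep
    have h2 : (e n).known.ncard ≤ Fintype.card S := by
      have := Set.ncard_le_ncard (Set.subset_univ (e n).known) (Set.toFinite _)
      simpa [Set.ncard_univ, Nat.card_eq_fintype_card] using this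
    omega
  refine ⟨?_, bound', ?_⟩
  · intro c _
    by_cases hg : GenUnknownApp ts c
    · exact Or.inl hg
    by_cases hsv : DeclSolvableApp ts c
    · exact Or.inr (Or.inl hsv)
    · exact Or.inr (Or.inr ⟨fun s hs hgoal => hsv ⟨s, hs, hgoal⟩, hg⟩)
  · rintro ⟨e, ops, h0, hstep, hio⟩
    choose f hf1 hf2 using hio
    set g : ℕ → ℕ := fun k => Nat.rec (f 0) (fun _ prev => f (prev + 1)) k with hg
    have hgop : ∀ k, ops (g k) = FOp.genUnknown := by
      intro k; cases k with
      | zero => exact hf2 0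
      | succ k => exact hf2 _
    have hgmono : StrictMono g := by
      have : ∀ k, g k < g (k + 1) := by
        intro k
        have := hf1 (g k + 1)
        simpa [hg] using this
      exact strictMono_nat_of_lt_succ this
    set K := Fintype.card S
    have hb := bound' e ops (g K + 1) h0 (fun m _ => hstep m)
    have hsub : (Finset.range (K + 1)).image g ⊆
        (Finset.range (g K + 1)).filter fun m => ops m = FOp.genUnknown := by
      intro x hx
      simp only [Finset.mem_image, Finset.mem_range] at hx
      obtain ⟨k, hk, rfl⟩ := hx
      simp only [Finset.mem_filter, Finset.mem_range]
      exact ⟨Nat.lt_succ_of_le (hgmono.monotone (Nat.lt_succ_iff.mp hk)), hgop k⟩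
    have hcard : K + 1 ≤
        ((Finset.range (g K + 1)).filter fun m => ops m = FOp.genUnknown).card := by
      calc K + 1 = ((Finset.range (K + 1)).image g).card := by
            rw [Finset.card_image_of_injective _ hgmono.injective, Finset.card_range]
        _ ≤ _ := Finset.card_le_card hsub
    omega
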